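/- arXiv:2210.12001 — 4 statements merged into one kernel-verified Lean document; each statement's English description precedes it below -/
import Mathlib

section
/- Let (w*, v*) be a boundary KKT point, i.e., ‖w* − w⁰‖_F = ε and −∇_w ℓ(w*, v*) = c (w* − w⁰) for some c > 0. For η̃ ∈ (0, 1], define f* := f(w*; v*), f̄ := f((1 + η̃) w* − η̃ w⁰; v*) (the network output after the gradient step of size η = η̃/c), and f′ := (1 + η̃) f*. Assume moreover ‖x_i‖₂ ≤ 1 and |y_i| ≤ C_y for all i, m ≥ 4, ‖f̄ − y‖₂ ≤ ‖f* − y‖₂, and ‖f* − y‖₂² ≤ n ((m/2) L ζ ε)² + n C_y². Then ‖f′ − f̄‖₂ · ‖f′ + f̄ − 2y‖₂ ≤ (η̃ ε² λ √(20 n)) · (√n C_y + 3 (n ((m/2) L ζ ε)² + n C_y²)^{1/2}), where λ := max_{1≤i≤n} sup_{t∈[0,2]} ‖∇²_w f(x_i; w⁰ + t(w* − w⁰), v*)‖₂ is the largest spectral norm of the Hessians of the network outputs along the segment. -/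
noncomputable section

/-- Euclidean (ℓ²) norm of a finite-dimensional real vector. -/
def eNorm {ι : Type*} [Fintype ι] (r : ι → ℝ) : ℝ :=
  Real.sqrt (∑ i, r i ^ 2)

/-- Frobenius norm of a hidden-weight configuration, neurons indexed by `Fin h ⊕ Fin h`
(first half / mirrored half, so the width is `m = 2h`). -/
def wFrob {d h : ℕ} (u : (Fin h ⊕ Fin h) → Fin d → ℝ) : ℝ :=
  Real.sqrt (∑ j, ∑ k, u j k ^ 2)

/-- Pairwise one-hidden-layer network
`f(x; w, v) = ∑_{j=1}^{m/2} vⱼ (σ(wⱼᵀ x) − σ(w_{j+m/2}ᵀ x))` with `m = 2h`. -/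
def pairNet (σ : ℝ → ℝ) {d h : ℕ} (x : Fin d → ℝ)
    (w : (Fin h ⊕ Fin h) → Fin d → ℝ) (v : Fin h → ℝ) : ℝ :=
  ∑ j : Fin h, v j * (σ (∑ k, w (Sum.inl j) k * x k) - σ (∑ k, w (Sum.inr j) k * x k))

/-- Vector of network outputs `f(w; v) = (f(x₁; w, v), …, f(xₙ; w, v)) ∈ ℝⁿ`. -/
def pairVec (σ : ℝ → ℝ) {d n h : ℕ} (x : Fin n → Fin d → ℝ)
    (w : (Fin h ⊕ Fin h) → Fin d → ℝ) (v : Fin h → ℝ) : Fin n → ℝ :=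
  fun i => pairNet σ (x i) w v

/-- Empirical loss `ℓ(w, v) = (1/2) ‖y − f(w; v)‖₂²`. -/
def pairLoss (σ : ℝ → ℝ) {d n h : ℕ} (x : Fin n → Fin d → ℝ) (y : Fin n → ℝ)
    (w : (Fin h ⊕ Fin h) → Fin d → ℝ) (v : Fin h → ℝ) : ℝ :=
  (1 / 2) * ∑ i, (y i - pairNet σ (x i) w v) ^ 2

/-- Gradient of the empirical loss with respect to the hidden weights, as a
hidden-weight-shaped array of partial derivatives. -/
def gradLossW (σ : ℝ → ℝ) {d n h : ℕ} (x : Fin n → Fin d → ℝ) (y : Fin n → ℝ)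
    (w : (Fin h ⊕ Fin h) → Fin d → ℝ) (v : Fin h → ℝ) :
    (Fin h ⊕ Fin h) → Fin d → ℝ :=
  fun j k => fderiv ℝ (fun w' => pairLoss σ x y w' v) w (Pi.single j (Pi.single k 1))

/-- Feasible set `B_{ζ,κ}` for the outer weights: every entry is at least `ζ` and the ratio
of any two entries is at most `κ`. -/
def inB {h : ℕ} (ζ κ : ℝ) (v : Fin h → ℝ) : Prop :=
  (∀ j, ζ ≤ v j) ∧ ∀ j j', v j / v j' ≤ κ

/-- `J̃(w)ᵀ r`, where `J̃(w) ∈ ℝ^{n × md}` is the `v`-stripped Jacobian whose `(i, j)` block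
is `σ'(wⱼᵀ xᵢ) xᵢᵀ`. -/
def strippedJacT (σ : ℝ → ℝ) {d n h : ℕ} (x : Fin n → Fin d → ℝ)
    (w : (Fin h ⊕ Fin h) → Fin d → ℝ) (r : Fin n → ℝ) :
    (Fin h ⊕ Fin h) → Fin d → ℝ :=
  fun j k => ∑ i, deriv σ (∑ s, w j s * x i s) * x i k * r i

/-- Smallest singular value of the `v`-stripped Jacobian `J̃(w) ∈ ℝ^{n × md}`:
the infimum of `‖J̃(w)ᵀ r‖₂` over unit vectors `r ∈ ℝⁿ`. -/
def sMin (σ : ℝ → ℝ) {d n h : ℕ} (x : Fin n → Fin d → ℝ)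
    (w : (Fin h ⊕ Fin h) → Fin d → ℝ) : ℝ :=
  sInf ((fun r : Fin n → ℝ => wFrob (strippedJacT σ x w r)) '' {r | eNorm r = 1})

lemma eNorm_eq_norm {n : ℕ} (r : Fin n → ℝ) :
    eNorm r = ‖(WithLp.equiv 2 (Fin n → ℝ)).symm r‖ := by
  rw [EuclideanSpace.norm_eq]
  unfold eNorm
  congr 1
  refine Finset.sum_congr rfl fun i _ => ?_
  rw [Real.norm_eq_abs, sq_abs]
  rfl

lemma eNorm_nonneg {n : ℕ} (r : Fin n → ℝ) : 0 ≤ eNorm r := Real.sqrt_nonneg _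

lemma eNorm_add_le {n : ℕ} (a b : Fin n → ℝ) :
    eNorm (fun i => a i + b i) ≤ eNorm a + eNorm b := by
  rw [eNorm_eq_norm, eNorm_eq_norm, eNorm_eq_norm]
  exact norm_add_le ((WithLp.equiv 2 (Fin n → ℝ)).symm a) ((WithLp.equiv 2 (Fin n → ℝ)).symm b)

lemma eNorm_smul {n : ℕ} (c : ℝ) (a : Fin n → ℝ) :
    eNorm (fun i => c * a i) = |c| * eNorm a := by
  rw [eNorm_eq_norm, eNorm_eq_norm]
  have : (WithLp.equiv 2 (Fin n → ℝ)).symm (fun i => c * a i)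
      = c • (WithLp.equiv 2 (Fin n → ℝ)).symm a := rfl
  rw [this, norm_smul, Real.norm_eq_abs]

lemma eNorm_le_of_forall {n : ℕ} (r : Fin n → ℝ) (c : ℝ) (hc : 0 ≤ c)
    (h : ∀ i, |r i| ≤ c) : eNorm r ≤ Real.sqrt n * c := by
  have h1 : ∑ i, r i ^ 2 ≤ (n : ℝ) * c ^ 2 := by
    calc ∑ i, r i ^ 2 ≤ ∑ _i : Fin n, c ^ 2 := by
          refine Finset.sum_le_sum fun i _ => ?_
          rw [← sq_abs]
          exact pow_le_pow_left₀ (abs_nonneg _) (h i) 2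
      _ = (n : ℝ) * c ^ 2 := by simp [Finset.sum_const]
  calc eNorm r ≤ Real.sqrt ((n : ℝ) * c ^ 2) := Real.sqrt_le_sqrt h1
    _ = Real.sqrt n * c := by
        rw [Real.sqrt_mul (Nat.cast_nonneg n), Real.sqrt_sq hc]

lemma eNorm_le_sqrt {n : ℕ} (r : Fin n → ℝ) (B : ℝ) (h : eNorm r ^ 2 ≤ B) :
    eNorm r ≤ Real.sqrt B := by
  exact (Real.le_sqrt (eNorm_nonneg r) ((sq_nonneg _).trans h)).2 h

lemma pairNet_contDiff (σ : ℝ → ℝ) (hσ : ContDiff ℝ (⊤ : ℕ∞) σ) {d h : ℕ} (x : Fin d → ℝ)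
    (v : Fin h → ℝ) : ContDiff ℝ (⊤ : ℕ∞) (fun w : (Fin h ⊕ Fin h) → Fin d → ℝ => pairNet σ x w v) := by
  unfold pairNet
  apply ContDiff.sum
  intro j _
  have hlin : ∀ a : Fin h ⊕ Fin h,
      ContDiff ℝ (⊤ : ℕ∞) (fun w : (Fin h ⊕ Fin h) → Fin d → ℝ => ∑ k, w a k * x k) := by
    intro a
    apply ContDiff.sum
    intro k _
    have e1 : ContDiff ℝ (⊤ : ℕ∞) (fun w : (Fin h ⊕ Fin h) → Fin d → ℝ => w a k) :=
      ((ContinuousLinearMap.proj (R := ℝ) (φ := fun _ : Fin d => ℝ) k).comp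
        (ContinuousLinearMap.proj (R := ℝ) (φ := fun _ : Fin h ⊕ Fin h => Fin d → ℝ) a)).contDiff
    exact e1.mul contDiff_const
  exact contDiff_const.mul ((hσ.comp (hlin (Sum.inl j))).sub (hσ.comp (hlin (Sum.inr j))))

lemma key_bound {d h : ℕ} (σ : ℝ → ℝ) (hσ : ContDiff ℝ (⊤ : ℕ∞) σ) (xi : Fin d → ℝ)
    (w0 wstar : (Fin h ⊕ Fin h) → Fin d → ℝ) (vstar : Fin h → ℝ)
    (hmirror : ∀ j, w0 (Sum.inr j) = w0 (Sum.inl j))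
    (η : ℝ) (hη0 : 0 < η) (hη1 : η ≤ 1) (M : ℝ) (hM0 : 0 ≤ M)
    (hM : ∀ t ∈ Set.Icc (0:ℝ) 2,
      |iteratedFDeriv ℝ 2 (fun w => pairNet σ xi w vstar)
        (w0 + t • (wstar - w0)) (fun _ => wstar - w0)| ≤ M) :
    |(1 + η) * pairNet σ xi wstar vstar -
      pairNet σ xi ((1 + η) • wstar - η • w0) vstar| ≤ 2 * η * M := by
  set u : (Fin h ⊕ Fin h) → Fin d → ℝ := wstar - w0 with hu
  set F : ((Fin h ⊕ Fin h) → Fin d → ℝ) → ℝ := fun w => pairNet σ xi w vstar with hFdef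
  have hF : ContDiff ℝ (⊤ : ℕ∞) F := pairNet_contDiff σ hσ xi vstar
  set p : ℝ → ((Fin h ⊕ Fin h) → Fin d → ℝ) := fun t => w0 + t • u with hp
  have hline : ∀ t : ℝ, HasDerivAt p u t := by
    intro t
    have := ((hasDerivAt_id t).smul_const u).const_add w0
    rw [one_smul] at this
    exact this
  set G : ℝ → ℝ := fun t => fderiv ℝ F (p t) u with hG
  have hg : ∀ t : ℝ, HasDerivAt (fun s => F (p s)) (G t) t := by
    intro t
    exact ((hF.differentiable (by simp) (p t)).hasFDerivAt).comp_hasDerivAt t (hline t)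
  set D : ℝ → ℝ := fun t => iteratedFDeriv ℝ 2 F (p t) (fun _ => u) with hD
  have hGd : ∀ t : ℝ, HasDerivAt G (D t) t := by
    intro t
    have hΦ : ContDiff ℝ (⊤ : ℕ∞) (fderiv ℝ F) := hF.fderiv_right (mod_cast le_top)
    have h2 : HasFDerivAt (fderiv ℝ F) (fderiv ℝ (fderiv ℝ F) (p t)) (p t) :=
      (hΦ.differentiable (by simp) (p t)).hasFDerivAt
    have h3 : HasDerivAt (fun s => fderiv ℝ F (p s))
        (fderiv ℝ (fderiv ℝ F) (p t) u) t := h2.comp_hasDerivAt t (hline t)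
    have h4 := (ContinuousLinearMap.apply ℝ ℝ u).hasFDerivAt.comp_hasDerivAt t h3
    have h5 : D t = fderiv ℝ (fderiv ℝ F) (p t) u u := by
      rw [hD]; simp only [iteratedFDeriv_two_apply]
    rw [hG]
    rw [h5]
    exact h4
  have hM' : ∀ t ∈ Set.Icc (0:ℝ) 2, |D t| ≤ M := hM
  -- bound on G differences
  have hGdiff : ∀ t ∈ Set.Icc (0:ℝ) 1, |G ((1+η)*t) - G t| ≤ M * η := by
    intro t ht
    have hab : t ≤ (1+η)*t := by nlinarith [ht.1]
    have hsub : Set.Icc t ((1+η)*t) ⊆ Set.Icc (0:ℝ) 2 := by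
      intro s hs
      constructor
      · linarith [hs.1, ht.1]
      · nlinarith [hs.2, ht.1, ht.2]
    have := norm_image_sub_le_of_norm_deriv_le_segment'
      (f := G) (f' := D) (C := M) (a := t) (b := (1+η)*t)
      (fun s hs => (hGd s).hasDerivWithinAt)
      (fun s hs => by
        rw [Real.norm_eq_abs]
        exact hM' s (hsub ⟨hs.1, hs.2.le⟩))
      ((1+η)*t) ⟨hab, le_refl _⟩
    rw [Real.norm_eq_abs] at this
    calc |G ((1+η)*t) - G t| ≤ M * ((1+η)*t - t) := this
      _ ≤ M * η := by
          nlinarith [ht.1, ht.2, mul_nonneg (mul_nonneg hM0 hη0.le)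
            (by linarith [ht.2] : (0:ℝ) ≤ 1 - t)]
  -- function q
  set q : ℝ → ℝ := fun t => F (p ((1+η)*t)) - (1+η) * F (p t) with hq
  have hq' : ∀ t : ℝ, HasDerivAt q (G ((1+η)*t) * (1+η) - (1+η) * G t) t := by
    intro t
    have hinner : HasDerivAt (fun t : ℝ => (1+η)*t) (1+η) t := by
      simpa using (hasDerivAt_id t).const_mul (1+η)
    have h1 : HasDerivAt (fun t : ℝ => F (p ((1+η)*t))) (G ((1+η)*t) * (1+η)) t :=
      (hg ((1+η)*t)).comp t hinner
    exact h1.sub ((hg t).const_mul (1+η))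
  have hmvt := norm_image_sub_le_of_norm_deriv_le_segment'
    (f := q) (f' := fun t => G ((1+η)*t) * (1+η) - (1+η) * G t) (C := 2*η*M)
    (a := 0) (b := 1)
    (fun s _ => (hq' s).hasDerivWithinAt)
    (fun s hs => by
      show ‖G ((1+η)*s) * (1+η) - (1+η) * G s‖ ≤ 2*η*M
      rw [Real.norm_eq_abs]
      have h1 := hGdiff s ⟨hs.1, hs.2.le⟩
      have h2 : G ((1+η)*s) * (1+η) - (1+η) * G s = (1+η) * (G ((1+η)*s) - G s) := by ring
      rw [h2, abs_mul]
      have h3 : |1+η| = 1+η := abs_of_pos (by linarith)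
      rw [h3]
      nlinarith [abs_nonneg (G ((1+η)*s) - G s)])
    1 ⟨zero_le_one, le_refl _⟩
  rw [Real.norm_eq_abs] at hmvt
  have hp0 : p 0 = w0 := by simp [hp]
  have hp1 : p 1 = wstar := by
    funext a b; simp [hp, hu]
  have hp1η : p (1+η) = (1 + η) • wstar - η • w0 := by
    funext a b
    simp only [hp, hu, Pi.add_apply, Pi.smul_apply, Pi.sub_apply, smul_eq_mul]
    ring
  have hFw0 : F w0 = 0 := by
    simp [hFdef, pairNet, hmirror]
  have hq0 : q 0 = -η * F w0 := by
    simp only [hq, mul_zero, hp0]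
    ring
  have hq1 : q 1 = F ((1 + η) • wstar - η • w0) - (1+η) * F wstar := by
    simp only [hq, mul_one, hp1, hp1η]
  rw [hq1, hq0, hFw0] at hmvt
  have : |F ((1 + η) • wstar - η • w0) - (1+η) * F wstar| ≤ 2*η*M := by
    simpa using hmvt
  calc |(1 + η) * F wstar - F ((1 + η) • wstar - η • w0)|
      = |F ((1 + η) • wstar - η • w0) - (1+η) * F wstar| := abs_sub_comm _ _
    _ ≤ 2*η*M := this

/-- at a boundary KKT point `(w*, v*)` (i.e. `‖w* − w⁰‖_F = ε` and
`−∇_w ℓ(w*, v*) = c (w* − w⁰)` with `c > 0`), for a step size `η̃ ∈ (0, 1]`, with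
`f* := f(w*; v*)`, `f̄ := f((1 + η̃) w* − η̃ w⁰; v*)` and `f′ := (1 + η̃) f*`, under the
stated data / descent / loss-bound assumptions one has
`‖f′ − f̄‖₂ ‖f′ + f̄ − 2y‖₂ ≤ η̃ ε² λ √(20 n) (√n C_y + 3 (n ((m/2) L ζ ε)² + n C_y²)^{1/2})`,
where `λ` bounds the spectral norms of the Hessians of the network outputs along the
segment `w⁰ + t (w* − w⁰)`, `t ∈ [0, 2]` (expressed through their quadratic forms). -/
theorem statement_7
    (d n h : ℕ) (hh : 2 ≤ h)
    (σ : ℝ → ℝ) (L : NNReal)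
    (hσ_an : ∀ z : ℝ, AnalyticAt ℝ σ z) (hσ_lip : LipschitzWith L σ)
    (x : Fin n → Fin d → ℝ) (y : Fin n → ℝ) (C_y : ℝ)
    (hx : ∀ i, eNorm (x i) ≤ 1) (hy : ∀ i, |y i| ≤ C_y)
    (w0 : (Fin h ⊕ Fin h) → Fin d → ℝ)
    (hmirror : ∀ j, w0 (Sum.inr j) = w0 (Sum.inl j))
    (ε ζ : ℝ) (hζ : 0 < ζ)
    (wstar : (Fin h ⊕ Fin h) → Fin d → ℝ) (vstar : Fin h → ℝ)
    (hboundary : wFrob (wstar - w0) = ε)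
    (hkkt : ∃ c : ℝ, 0 < c ∧
      ∀ j k, -(gradLossW σ x y wstar vstar j k) = c * (wstar j k - w0 j k))
    (η : ℝ) (hη0 : 0 < η) (hη1 : η ≤ 1)
    (hdesc : eNorm (fun i => pairNet σ (x i) ((1 + η) • wstar - η • w0) vstar - y i) ≤
      eNorm (fun i => pairNet σ (x i) wstar vstar - y i))
    (hfb : eNorm (fun i => pairNet σ (x i) wstar vstar - y i) ^ 2 ≤
      (n : ℝ) * ((h : ℝ) * (L : ℝ) * ζ * ε) ^ 2 + (n : ℝ) * C_y ^ 2)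
    (lam : ℝ) (hlam0 : 0 ≤ lam)
    (hlam : ∀ i, ∀ t ∈ Set.Icc (0 : ℝ) 2, ∀ u : (Fin h ⊕ Fin h) → Fin d → ℝ,
      |iteratedFDeriv ℝ 2 (fun w => pairNet σ (x i) w vstar)
          (w0 + t • (wstar - w0)) (fun _ => u)| ≤ lam * wFrob u ^ 2) :
    eNorm (fun i =>
        (1 + η) * pairNet σ (x i) wstar vstar -
          pairNet σ (x i) ((1 + η) • wstar - η • w0) vstar) *
      eNorm (fun i =>
        (1 + η) * pairNet σ (x i) wstar vstar +
          pairNet σ (x i) ((1 + η) • wstar - η • w0) vstar - 2 * y i) ≤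
    η * ε ^ 2 * lam * Real.sqrt (20 * (n : ℝ)) *
      (Real.sqrt (n : ℝ) * C_y +
        3 * Real.sqrt ((n : ℝ) * ((h : ℝ) * (L : ℝ) * ζ * ε) ^ 2 + (n : ℝ) * C_y ^ 2)) := by
  obtain rfl | hn := Nat.eq_zero_or_pos n
  · simp [eNorm]
  have hσC : ContDiff ℝ (⊤ : ℕ∞) σ := contDiff_iff_contDiffAt.mpr fun z => (hσ_an z).contDiffAt
  have hCy : 0 ≤ C_y := le_trans (abs_nonneg _) (hy ⟨0, hn⟩)
  have hε : 0 ≤ ε := hboundary ▸ Real.sqrt_nonneg _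
  set M : ℝ := lam * ε ^ 2 with hMdef
  have hM0 : 0 ≤ M := mul_nonneg hlam0 (sq_nonneg _)
  have hpt : ∀ i, |(1 + η) * pairNet σ (x i) wstar vstar -
      pairNet σ (x i) ((1 + η) • wstar - η • w0) vstar| ≤ 2 * η * M := by
    intro i
    refine key_bound σ hσC (x i) w0 wstar vstar hmirror η hη0 hη1 M hM0 ?_
    intro t ht
    have := hlam i t ht (wstar - w0)
    rwa [hboundary] at this
  set B' : ℝ := (n : ℝ) * ((h : ℝ) * (L : ℝ) * ζ * ε) ^ 2 + (n : ℝ) * C_y ^ 2 with hB'def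
  have hB'0 : 0 ≤ B' := by positivity
  have hfsy : eNorm (fun i => pairNet σ (x i) wstar vstar - y i) ≤ Real.sqrt B' :=
    eNorm_le_sqrt _ _ hfb
  have hfby : eNorm (fun i => pairNet σ (x i) ((1 + η) • wstar - η • w0) vstar - y i)
      ≤ Real.sqrt B' := le_trans hdesc hfsy
  have hA : eNorm (fun i => (1 + η) * pairNet σ (x i) wstar vstar -
      pairNet σ (x i) ((1 + η) • wstar - η • w0) vstar) ≤ Real.sqrt n * (2 * η * M) :=
    eNorm_le_of_forall _ _ (by positivity) hpt
  have hdecomp : (fun i => (1 + η) * pairNet σ (x i) wstar vstar +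
        pairNet σ (x i) ((1 + η) • wstar - η • w0) vstar - 2 * y i)
      = fun i => ((1 + η) * (pairNet σ (x i) wstar vstar - y i)) +
          ((pairNet σ (x i) ((1 + η) • wstar - η • w0) vstar - y i) + η * y i) :=
    funext fun i => by ring
  have hyb : eNorm y ≤ Real.sqrt n * C_y := eNorm_le_of_forall _ _ hCy hy
  have hT : eNorm (fun i => (1 + η) * pairNet σ (x i) wstar vstar +
        pairNet σ (x i) ((1 + η) • wstar - η • w0) vstar - 2 * y i)
      ≤ Real.sqrt n * C_y + 3 * Real.sqrt B' := by
    rw [hdecomp]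
    have h1 := eNorm_add_le (fun i => (1 + η) * (pairNet σ (x i) wstar vstar - y i))
      (fun i => (pairNet σ (x i) ((1 + η) • wstar - η • w0) vstar - y i) + η * y i)
    have h2 := eNorm_add_le (fun i => pairNet σ (x i) ((1 + η) • wstar - η • w0) vstar - y i)
      (fun i => η * y i)
    have h3 : eNorm (fun i => (1 + η) * (pairNet σ (x i) wstar vstar - y i))
        = (1 + η) * eNorm (fun i => pairNet σ (x i) wstar vstar - y i) := by
      rw [eNorm_smul]
      congr 1
      exact abs_of_pos (by linarith)
    have h4 : eNorm (fun i => η * y i) = η * eNorm y := by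
      rw [eNorm_smul, abs_of_pos hη0]
    have h5 : eNorm (fun i => (1 + η) * (pairNet σ (x i) wstar vstar - y i))
        ≤ 2 * Real.sqrt B' := by
      rw [h3]
      nlinarith [eNorm_nonneg (fun i => pairNet σ (x i) wstar vstar - y i), hfsy]
    have h6 : eNorm (fun i => η * y i) ≤ Real.sqrt (n : ℝ) * C_y := by
      rw [h4]
      nlinarith [eNorm_nonneg y, hyb,
        mul_nonneg (by linarith : (0:ℝ) ≤ 1 - η) (eNorm_nonneg y)]
    linarith [h1, h2, h5, h6, hfby]
  have hS0 : 0 ≤ Real.sqrt n * C_y + 3 * Real.sqrt B' :=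
    add_nonneg (mul_nonneg (Real.sqrt_nonneg _) hCy) (by positivity)
  have hstep : eNorm (fun i => (1 + η) * pairNet σ (x i) wstar vstar -
        pairNet σ (x i) ((1 + η) • wstar - η • w0) vstar) *
      eNorm (fun i => (1 + η) * pairNet σ (x i) wstar vstar +
        pairNet σ (x i) ((1 + η) • wstar - η • w0) vstar - 2 * y i)
      ≤ (Real.sqrt n * (2 * η * M)) * (Real.sqrt n * C_y + 3 * Real.sqrt B') :=
    mul_le_mul hA hT (eNorm_nonneg _) (by positivity)
  refine le_trans hstep ?_
  have h20 : Real.sqrt (20 * (n : ℝ)) = Real.sqrt 20 * Real.sqrt n :=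
    Real.sqrt_mul (by norm_num) _
  have h2le : (2 : ℝ) ≤ Real.sqrt 20 :=
    (Real.le_sqrt (by norm_num) (by norm_num)).2 (by norm_num)
  have hcoef : Real.sqrt n * (2 * η * M) ≤ η * ε ^ 2 * lam * Real.sqrt (20 * (n : ℝ)) := by
    rw [h20, hMdef]
    nlinarith [Real.sqrt_nonneg (n : ℝ), mul_nonneg hlam0 (sq_nonneg ε), hη0.le,
      mul_nonneg (mul_nonneg hη0.le (mul_nonneg hlam0 (sq_nonneg ε))) (Real.sqrt_nonneg (n:ℝ))]
  exact mul_le_mul_of_nonneg_right hcoef hS0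
end
end

section
/- Let w⁰ satisfy w⁰_{j+m/2} = w⁰_j for j = 1, …, m/2, let σ be twice continuously differentiable, let v ∈ ℝ^{m/2}, and let w satisfy ‖w − w⁰‖_F ≤ ε. For η̃ ∈ (0, 1], set f* := f(w; v), f̄ := f((1 + η̃) w − η̃ w⁰; v), and f′ := (1 + η̃) f*. Then ‖f′ − f̄‖₂² ≤ 20 n η̃² ε⁴ λ², where λ := max_{1≤i≤n} sup_{t∈[0,2]} ‖∇²_w f(x_i; w⁰ + t(w − w⁰), v)‖₂ is the largest spectral norm of the Hessians (with respect to w) of the network outputs along the segment from w⁰ through w. -/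
noncomputable section

open Set

lemma myLip (f f' : ℝ → ℝ) {s : Set ℝ} (hs : Convex ℝ s) (C : ℝ)
    (hf : ∀ t, HasDerivAt f (f' t) t) (hC : ∀ t ∈ s, |f' t| ≤ C)
    {a b : ℝ} (ha : a ∈ s) (hb : b ∈ s) : |f b - f a| ≤ C * |b - a| := by
  have := Convex.norm_image_sub_le_of_norm_hasDerivWithin_le
    (f := f) (f' := f') (s := s)
    (fun t ht => (hf t).hasDerivWithinAt)
    (fun t ht => by simpa [Real.norm_eq_abs] using hC t ht) hs ha hb
  simpa [Real.norm_eq_abs] using this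

lemma myTaylor (g g₁ g₂ : ℝ → ℝ) (M a b : ℝ)
    (ha : a ∈ Icc (0:ℝ) 2) (hb : b ∈ Icc (0:ℝ) 2)
    (hg : ∀ t, HasDerivAt g (g₁ t) t)
    (hg₁ : ∀ t, HasDerivAt g₁ (g₂ t) t)
    (hM : ∀ t ∈ Icc (0:ℝ) 2, |g₂ t| ≤ M) :
    |g b - g a - (b - a) * g₁ a| ≤ M * (b - a) ^ 2 := by
  have hsub : uIcc a b ⊆ Icc (0:ℝ) 2 := uIcc_subset_Icc ha hb
  have hstep : ∀ t ∈ uIcc a b, |g₁ t - g₁ a| ≤ M * |b - a| := by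
    intro t ht
    have h1 : |g₁ t - g₁ a| ≤ M * |t - a| :=
      myLip g₁ g₂ (convex_uIcc a b) M hg₁ (fun s hs => hM s (hsub hs)) left_mem_uIcc ht
    have h2 : |t - a| ≤ |b - a| := abs_sub_left_of_mem_uIcc ht
    have hM0 : 0 ≤ M := le_trans (abs_nonneg _) (hM a ha)
    calc |g₁ t - g₁ a| ≤ M * |t - a| := h1
      _ ≤ M * |b - a| := by exact mul_le_mul_of_nonneg_left h2 hM0
  have key : |(g b - b * g₁ a) - (g a - a * g₁ a)| ≤ (M * |b - a|) * |b - a| := by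
    refine myLip (fun t => g t - t * g₁ a) (fun t => g₁ t - g₁ a) (convex_uIcc a b)
      (M * |b - a|) (fun t => ((hg t).sub (((hasDerivAt_id t).mul_const _).congr_deriv (by ring))))
      hstep left_mem_uIcc right_mem_uIcc
  have h3 : |g b - g a - (b - a) * g₁ a| ≤ (M * |b - a|) * |b - a| := by
    convert key using 2; ring
  calc |g b - g a - (b - a) * g₁ a| ≤ (M * |b - a|) * |b - a| := h3
    _ = M * (b - a) ^ 2 := by rw [← sq_abs]; ring

/-- with mirrored `w⁰`, twice continuously differentiable `σ`,
`‖w − w⁰‖_F ≤ ε` and `η̃ ∈ (0, 1]`, setting `f* := f(w; v)`,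
`f̄ := f((1 + η̃) w − η̃ w⁰; v)` and `f′ := (1 + η̃) f*`, one has
`‖f′ − f̄‖₂² ≤ 20 n η̃² ε⁴ λ²`, where `λ` bounds the spectral norms of the Hessians
(with respect to `w`) of the network outputs along the segment `w⁰ + t (w − w⁰)`,
`t ∈ [0, 2]` (expressed through their quadratic forms). -/
theorem statement_8
    (d n h : ℕ)
    (σ : ℝ → ℝ) (hσ : ContDiff ℝ 2 σ)
    (x : Fin n → Fin d → ℝ)
    (w0 : (Fin h ⊕ Fin h) → Fin d → ℝ)
    (hmirror : ∀ j, w0 (Sum.inr j) = w0 (Sum.inl j))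
    (v : Fin h → ℝ) (ε : ℝ)
    (w : (Fin h ⊕ Fin h) → Fin d → ℝ)
    (hw : wFrob (w - w0) ≤ ε)
    (η : ℝ) (hη0 : 0 < η) (hη1 : η ≤ 1)
    (lam : ℝ) (hlam0 : 0 ≤ lam)
    (hlam : ∀ i, ∀ t ∈ Set.Icc (0 : ℝ) 2, ∀ u : (Fin h ⊕ Fin h) → Fin d → ℝ,
      |iteratedFDeriv ℝ 2 (fun w' => pairNet σ (x i) w' v)
          (w0 + t • (w - w0)) (fun _ => u)| ≤ lam * wFrob u ^ 2) :
    eNorm (fun i =>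
        (1 + η) * pairNet σ (x i) w v -
          pairNet σ (x i) ((1 + η) • w - η • w0) v) ^ 2 ≤
      20 * (n : ℝ) * η ^ 2 * ε ^ 4 * lam ^ 2 := by
  classical
  set b := w - w0 with hb
  set M := lam * ε ^ 2 with hMdef
  have hε0 : 0 ≤ ε := le_trans (Real.sqrt_nonneg _) hw
  have hM0 : 0 ≤ M := by positivity
  have key : ∀ i, |(1 + η) * pairNet σ (x i) w v -
      pairNet σ (x i) ((1 + η) • w - η • w0) v| ≤ 2 * η * M := by
    intro i
    set F : ((Fin h ⊕ Fin h) → Fin d → ℝ) → ℝ := fun w' => pairNet σ (x i) w' v with hFdef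
    have hFc : ContDiff ℝ 2 F := by
      unfold F; unfold pairNet
      apply ContDiff.sum; intro j _
      exact contDiff_const.mul
        ((hσ.comp (ContDiff.sum fun k _ =>
            (contDiff_apply_apply _ _ _ _).mul contDiff_const)).sub
         (hσ.comp (ContDiff.sum fun k _ =>
            (contDiff_apply_apply _ _ _ _).mul contDiff_const)))
    set L : ℝ → ((Fin h ⊕ Fin h) → Fin d → ℝ) := fun t => w0 + t • b with hLdef
    have hLd : ∀ t, HasDerivAt L b t := fun t => by
      exact (((hasDerivAt_id t).smul_const b).const_add w0).congr_deriv (one_smul _ _)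
    set g : ℝ → ℝ := fun t => F (L t) with hgdef
    set g₁ : ℝ → ℝ := fun t => fderiv ℝ F (L t) b with hg1def
    set g₂ : ℝ → ℝ := fun t => fderiv ℝ (fderiv ℝ F) (L t) b b with hg2def
    have hg : ∀ t, HasDerivAt g (g₁ t) t := fun t =>
      ((hFc.differentiable (by norm_num) (L t)).hasFDerivAt).comp_hasDerivAt t (hLd t)
    have hdF : ContDiff ℝ 1 (fderiv ℝ F) := hFc.fderiv_right (by norm_num)
    have hg₁ : ∀ t, HasDerivAt g₁ (g₂ t) t := by
      intro t
      have h2 : HasDerivAt (fun s => fderiv ℝ F (L s)) (fderiv ℝ (fderiv ℝ F) (L t) b) t :=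
        ((hdF.differentiable (by norm_num) (L t)).hasFDerivAt).comp_hasDerivAt t (hLd t)
      simpa using h2.clm_apply (hasDerivAt_const t b)
    have hMg : ∀ t ∈ Set.Icc (0:ℝ) 2, |g₂ t| ≤ M := by
      intro t ht
      have h1 := hlam i t ht b
      rw [iteratedFDeriv_two_apply] at h1
      have hwf : wFrob b ^ 2 ≤ ε ^ 2 := by
        have : 0 ≤ wFrob b := Real.sqrt_nonneg _
        nlinarith
      calc |g₂ t| ≤ lam * wFrob b ^ 2 := h1
        _ ≤ M := by rw [hMdef]; exact mul_le_mul_of_nonneg_left hwf hlam0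
    have hA := myTaylor g g₁ g₂ M 1 0 (by constructor <;> norm_num)
      (by constructor <;> norm_num) hg hg₁ hMg
    have hB := myTaylor g g₁ g₂ M 1 (1+η) (by constructor <;> norm_num)
      (by constructor <;> nlinarith) hg hg₁ hMg
    have hg0 : g 0 = 0 := by
      simp [hgdef, hLdef, hFdef, pairNet, hmirror]
    have hgw : g 1 = pairNet σ (x i) w v := by
      have : L 1 = w := by
        funext j k
        simp [hLdef, hb, Pi.sub_apply]
      show F (L 1) = _
      rw [this]
    have hgη : g (1+η) = pairNet σ (x i) ((1 + η) • w - η • w0) v := by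
      have : L (1+η) = (1 + η) • w - η • w0 := by
        funext j k
        simp [hLdef, hb, Pi.sub_apply, smul_eq_mul]
        ring
      show F (L (1+η)) = _
      rw [this]
    rw [← hgw, ← hgη]
    have hT : (1+η) * g 1 - g (1+η) =
        -(η * (g 0 - g 1 - (0 - 1) * g₁ 1)) - (g (1+η) - g 1 - (1 + η - 1) * g₁ 1) := by
      rw [hg0]; ring
    have e1 : |(-(η * (g 0 - g 1 - (0 - 1) * g₁ 1)) - (g (1+η) - g 1 - (1 + η - 1) * g₁ 1))|
        ≤ η * (M * (0-1)^2) + M * (1 + η - 1)^2 := by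
      calc |(-(η * (g 0 - g 1 - (0 - 1) * g₁ 1)) - (g (1+η) - g 1 - (1 + η - 1) * g₁ 1))|
          ≤ |(-(η * (g 0 - g 1 - (0 - 1) * g₁ 1)))| + |(g (1+η) - g 1 - (1 + η - 1) * g₁ 1)| :=
            abs_sub _ _
        _ = η * |g 0 - g 1 - (0 - 1) * g₁ 1| + |g (1+η) - g 1 - (1 + η - 1) * g₁ 1| := by
            rw [abs_neg, abs_mul, abs_of_pos hη0]
        _ ≤ η * (M * (0-1)^2) + M * (1 + η - 1)^2 := by
            gcongr
    calc |(1+η) * g 1 - g (1+η)|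
        = |(-(η * (g 0 - g 1 - (0 - 1) * g₁ 1)) - (g (1+η) - g 1 - (1 + η - 1) * g₁ 1))| := by
          rw [hT]
      _ ≤ η * (M * (0-1)^2) + M * (1 + η - 1)^2 := e1
      _ ≤ 2 * η * M := by nlinarith [mul_nonneg hM0 hη0.le]
  have hsum : eNorm (fun i =>
      (1 + η) * pairNet σ (x i) w v -
        pairNet σ (x i) ((1 + η) • w - η • w0) v) ^ 2
      = ∑ i, ((1 + η) * pairNet σ (x i) w v -
        pairNet σ (x i) ((1 + η) • w - η • w0) v) ^ 2 := by
    rw [eNorm, Real.sq_sqrt (Finset.sum_nonneg fun i _ => sq_nonneg _)]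
  rw [hsum]
  calc (∑ i, ((1 + η) * pairNet σ (x i) w v -
        pairNet σ (x i) ((1 + η) • w - η • w0) v) ^ 2)
      ≤ ∑ _i : Fin n, (2 * η * M)^2 := by
        apply Finset.sum_le_sum
        intro i _
        rw [← sq_abs]
        exact pow_le_pow_left₀ (abs_nonneg _) (key i) 2
    _ = (n : ℝ) * (2 * η * M)^2 := by
        rw [Finset.sum_const, Finset.card_univ, Fintype.card_fin, nsmul_eq_mul]
    _ ≤ 20 * (n : ℝ) * η ^ 2 * ε ^ 4 * lam ^ 2 := by
        have hn : (0:ℝ) ≤ (n:ℝ) := Nat.cast_nonneg n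
        have hexp : (2 * η * M)^2 = 4 * (η^2 * ε^4 * lam^2) := by rw [hMdef]; ring
        rw [hexp]
        have hpos : (0:ℝ) ≤ (n:ℝ) * (η^2 * ε^4 * lam^2) := by positivity
        nlinarith
end
end

section
/- Let σ be continuously differentiable, let v ∈ ℝ^{m/2} have all entries at least v_min > 0, and let r := f(w; v) − y ∈ ℝⁿ. Then ‖∇_w ℓ(w, v)‖₂ ≥ v_min · s(w) · ‖r‖₂, where s(w) is the smallest singular value of the v-stripped Jacobian J̃(w) ∈ ℝ^{n×md} whose (i, j) block is σ′(w_jᵀ x_i) x_iᵀ. Consequently, if s(w) > 0, the squared gradient norm with respect to the hidden weights dominates the loss: ‖∇_w ℓ(w, v)‖₂² ≥ 2 v_min² s(w)² ℓ(w, v). -/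
noncomputable section

/-- dot-with-`c`-after-projection as a continuous linear map. -/
def dotPr {d h : ℕ} (jj : Fin h ⊕ Fin h) (c : Fin d → ℝ) :
    ((Fin h ⊕ Fin h) → Fin d → ℝ) →L[ℝ] ℝ :=
  LinearMap.toContinuousLinearMap
    { toFun := fun u => ∑ s, u jj s * c s
      map_add' := by intro a b; simp [add_mul, Finset.sum_add_distrib]
      map_smul' := by intro m a; simp [Finset.mul_sum, mul_assoc] }

@[simp] lemma dotPr_apply {d h : ℕ} (jj : Fin h ⊕ Fin h) (c : Fin d → ℝ)
    (u : (Fin h ⊕ Fin h) → Fin d → ℝ) : dotPr jj c u = ∑ s, u jj s * c s := rfl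

lemma grad_eq (σ : ℝ → ℝ) (hσ : ContDiff ℝ 1 σ) {d n h : ℕ}
    (x : Fin n → Fin d → ℝ) (y : Fin n → ℝ)
    (w : (Fin h ⊕ Fin h) → Fin d → ℝ) (v : Fin h → ℝ) :
    gradLossW σ x y w v = fun j k =>
      Sum.elim v (fun j' => -v j') j *
        strippedJacT σ x w (fun i => pairNet σ (x i) w v - y i) j k := by
  have hd : Differentiable ℝ σ := hσ.differentiable one_ne_zero
  funext j k
  have hg : ∀ (jj : Fin h ⊕ Fin h) (i : Fin n),
      HasFDerivAt (fun w' : (Fin h ⊕ Fin h) → Fin d → ℝ => ∑ s, w' jj s * x i s)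
        (dotPr jj (x i)) w := fun jj i => (dotPr jj (x i)).hasFDerivAt
  have hσi : ∀ (jj : Fin h ⊕ Fin h) (i : Fin n),
      HasFDerivAt (fun w' : (Fin h ⊕ Fin h) → Fin d → ℝ => σ (∑ s, w' jj s * x i s))
        (deriv σ (∑ s, w jj s * x i s) • dotPr jj (x i)) w :=
    fun jj i => ((hd _).hasDerivAt).comp_hasFDerivAt w (hg jj i)
  have hres : ∀ i : Fin n, HasFDerivAt
      (fun w' : (Fin h ⊕ Fin h) → Fin d → ℝ =>
        y i - ∑ j' : Fin h, v j' * (σ (∑ s, w' (Sum.inl j') s * x i s) -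
          σ (∑ s, w' (Sum.inr j') s * x i s)))
      (-∑ j' : Fin h, v j' • (deriv σ (∑ s, w (Sum.inl j') s * x i s) • dotPr (Sum.inl j') (x i)
        - deriv σ (∑ s, w (Sum.inr j') s * x i s) • dotPr (Sum.inr j') (x i))) w := fun i =>
    (HasFDerivAt.fun_sum (fun (j' : Fin h) (_ : j' ∈ Finset.univ) =>
      (((hσi (Sum.inl j') i).fun_sub (hσi (Sum.inr j') i)).const_mul (v j')))).const_sub (y i)
  have hL := (HasFDerivAt.fun_sum (fun i (_ : i ∈ Finset.univ) =>
      (hres i).fun_mul (hres i))).const_mul ((1:ℝ)/2)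
  simp only [gradLossW, pairLoss, pairNet, sq]
  rw [hL.fderiv]
  simp only [ContinuousLinearMap.smul_apply, ContinuousLinearMap.sum_apply,
    ContinuousLinearMap.sub_apply, ContinuousLinearMap.neg_apply, ContinuousLinearMap.add_apply, dotPr_apply,
    smul_eq_mul, strippedJacT]
  have hsing : ∀ (i : Fin n) (jj : Fin h ⊕ Fin h),
      (∑ s, (Pi.single j (Pi.single k 1) : (Fin h ⊕ Fin h) → Fin d → ℝ) jj s * x i s) = if jj = j then x i k else 0 := by
    intro i jj
    rcases eq_or_ne jj j with rfl | hne
    · simp [Pi.single_apply]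
    · simp [Pi.single_apply, hne]
  simp only [hsing]
  rcases j with j0 | j0
  · simp only [Sum.elim_inl, Sum.inl.injEq, Sum.inr.injEq, mul_ite, mul_zero,
      mul_one, if_false, reduceCtorEq, Finset.sum_neg_distrib, neg_zero, Finset.sum_ite_eq',
      Finset.mem_univ, if_true, sub_zero, zero_sub, mul_neg, neg_mul, neg_neg]
    rw [Finset.mul_sum, Finset.mul_sum]
    exact Finset.sum_congr rfl fun i _ => by ring
  · simp only [Sum.elim_inr, Sum.inl.injEq, Sum.inr.injEq, mul_ite, mul_zero,
      mul_one, if_false, reduceCtorEq, Finset.sum_neg_distrib, neg_zero, Finset.sum_ite_eq',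
      Finset.mem_univ, if_true, sub_zero, zero_sub, mul_neg, neg_mul, neg_neg]
    rw [Finset.mul_sum, Finset.mul_sum, ← Finset.sum_neg_distrib]
    exact Finset.sum_congr rfl fun i _ => by ring


lemma eNorm_nonneg_s11 {ι : Type*} [Fintype ι] (r : ι → ℝ) : 0 ≤ eNorm r := Real.sqrt_nonneg _

lemma wFrob_nonneg {d h : ℕ} (u : (Fin h ⊕ Fin h) → Fin d → ℝ) : 0 ≤ wFrob u :=
  Real.sqrt_nonneg _

lemma wFrob_const_mul {d h : ℕ} (c : ℝ) (u : (Fin h ⊕ Fin h) → Fin d → ℝ) :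
    wFrob (fun j k => c * u j k) = |c| * wFrob u := by
  unfold wFrob
  rw [← Real.sqrt_sq_eq_abs, ← Real.sqrt_mul (sq_nonneg c)]
  congr 1
  simp [Finset.mul_sum, mul_pow, mul_add]

lemma eNorm_const_mul {ι : Type*} [Fintype ι] (c : ℝ) (r : ι → ℝ) :
    eNorm (fun i => c * r i) = |c| * eNorm r := by
  unfold eNorm
  rw [← Real.sqrt_sq_eq_abs, ← Real.sqrt_mul (sq_nonneg c)]
  congr 1
  simp [Finset.mul_sum, mul_pow, mul_add]

lemma sMin_mul_eNorm_le (σ : ℝ → ℝ) {d n h : ℕ} (x : Fin n → Fin d → ℝ)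
    (w : (Fin h ⊕ Fin h) → Fin d → ℝ) (r : Fin n → ℝ) :
    sMin σ x w * eNorm r ≤ wFrob (strippedJacT σ x w r) := by
  rcases eq_or_ne (eNorm r) 0 with ht | ht
  · rw [ht, mul_zero]; exact wFrob_nonneg _
  · have htpos : 0 < eNorm r := lt_of_le_of_ne (eNorm_nonneg_s11 r) (Ne.symm ht)
    set t := eNorm r with htdef
    set u : Fin n → ℝ := fun i => t⁻¹ * r i with hu
    have hur : eNorm u = 1 := by
      rw [hu, eNorm_const_mul, abs_of_pos (inv_pos.mpr htpos), inv_mul_cancel₀ ht]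
    have hmem : wFrob (strippedJacT σ x w u) ∈
        ((fun r : Fin n → ℝ => wFrob (strippedJacT σ x w r)) '' {r | eNorm r = 1}) :=
      ⟨u, hur, rfl⟩
    have hbdd : BddBelow ((fun r : Fin n → ℝ => wFrob (strippedJacT σ x w r)) ''
        {r | eNorm r = 1}) := ⟨0, fun a ⟨r', _, hr'⟩ => hr' ▸ wFrob_nonneg _⟩
    have hle : sMin σ x w ≤ wFrob (strippedJacT σ x w u) := csInf_le hbdd hmem
    have hstrip : strippedJacT σ x w r = fun j k => t * strippedJacT σ x w u j k := by
      funext j k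
      simp only [strippedJacT, hu, Finset.mul_sum]
      exact Finset.sum_congr rfl fun i _ => by field_simp
    calc sMin σ x w * t ≤ wFrob (strippedJacT σ x w u) * t :=
          mul_le_mul_of_nonneg_right hle htpos.le
      _ = wFrob (strippedJacT σ x w r) := by
          rw [hstrip, wFrob_const_mul, abs_of_pos htpos]; ring

lemma sMin_nonneg (σ : ℝ → ℝ) {d n h : ℕ} (x : Fin n → Fin d → ℝ)
    (w : (Fin h ⊕ Fin h) → Fin d → ℝ) : 0 ≤ sMin σ x w :=
  Real.sInf_nonneg (fun a ⟨r', _, hr'⟩ => hr' ▸ wFrob_nonneg _)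

/-- if every entry of `v` is at least `v_min > 0` and `r := f(w; v) − y`,
then `‖∇_w ℓ(w, v)‖₂ ≥ v_min · s(w) · ‖r‖₂`, where `s(w)` is the smallest singular value of
the `v`-stripped Jacobian `J̃(w)`; consequently, if `s(w) > 0`, the squared gradient norm
dominates the loss: `‖∇_w ℓ(w, v)‖₂² ≥ 2 v_min² s(w)² ℓ(w, v)`. -/
theorem statement_11
    (d n h : ℕ)
    (σ : ℝ → ℝ) (hσ : ContDiff ℝ 1 σ)
    (x : Fin n → Fin d → ℝ) (y : Fin n → ℝ)
    (w : (Fin h ⊕ Fin h) → Fin d → ℝ) (v : Fin h → ℝ)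
    (vmin : ℝ) (hvmin : 0 < vmin) (hv : ∀ j, vmin ≤ v j) :
    (vmin * sMin σ x w * eNorm (fun i => pairNet σ (x i) w v - y i) ≤
        wFrob (gradLossW σ x y w v)) ∧
      (0 < sMin σ x w →
        2 * vmin ^ 2 * sMin σ x w ^ 2 * pairLoss σ x y w v ≤
          wFrob (gradLossW σ x y w v) ^ 2) := by
  set r : Fin n → ℝ := fun i => pairNet σ (x i) w v - y i with hr
  set S := strippedJacT σ x w r with hS
  have helim : ∀ j : Fin h ⊕ Fin h, vmin ^ 2 ≤ (Sum.elim v (fun j' => -v j') j) ^ 2 := by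
    intro j
    rcases j with j0 | j0
    · simpa using pow_le_pow_left₀ hvmin.le (hv j0) 2
    · simpa using pow_le_pow_left₀ hvmin.le (hv j0) 2
  have hfrob : vmin * wFrob S ≤ wFrob (gradLossW σ x y w v) := by
    rw [grad_eq σ hσ x y w v]
    have : wFrob (fun j k => Sum.elim v (fun j' => -v j') j * S j k) =
        Real.sqrt (∑ j, ∑ k, (Sum.elim v (fun j' => -v j') j) ^ 2 * S j k ^ 2) := by
      unfold wFrob; congr 1; exact Finset.sum_congr rfl fun j _ =>
        Finset.sum_congr rfl fun k _ => (mul_pow _ _ _)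
    rw [this]
    have hb : vmin * wFrob S = Real.sqrt (∑ j, ∑ k, vmin ^ 2 * S j k ^ 2) := by
      rw [show (∑ j, ∑ k, vmin ^ 2 * S j k ^ 2) = vmin ^ 2 * ∑ j, ∑ k, S j k ^ 2 from by
        simp [Finset.mul_sum, mul_add], Real.sqrt_mul (sq_nonneg vmin),
        Real.sqrt_sq hvmin.le, wFrob]
    rw [hb]
    apply Real.sqrt_le_sqrt
    refine Finset.sum_le_sum fun j _ => Finset.sum_le_sum fun k _ => ?_
    exact mul_le_mul_of_nonneg_right (helim j) (sq_nonneg _)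
  have hmain : vmin * sMin σ x w * eNorm r ≤ wFrob (gradLossW σ x y w v) := by
    calc vmin * sMin σ x w * eNorm r = vmin * (sMin σ x w * eNorm r) := by ring
      _ ≤ vmin * wFrob S := mul_le_mul_of_nonneg_left (sMin_mul_eNorm_le σ x w r) hvmin.le
      _ ≤ _ := hfrob
  refine ⟨hmain, fun hs => ?_⟩
  have hloss : eNorm r ^ 2 = 2 * pairLoss σ x y w v := by
    rw [eNorm, Real.sq_sqrt (Finset.sum_nonneg fun i _ => sq_nonneg _), pairLoss,
      ← mul_assoc]
    norm_num
    exact Finset.sum_congr rfl fun i _ => by rw [hr]; ring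
  have h0 : 0 ≤ vmin * sMin σ x w * eNorm r :=
    mul_nonneg (mul_nonneg hvmin.le (sMin_nonneg σ x w)) (eNorm_nonneg_s11 r)
  have hsq := pow_le_pow_left₀ h0 hmain 2
  calc 2 * vmin ^ 2 * sMin σ x w ^ 2 * pairLoss σ x y w v
      = (vmin * sMin σ x w * eNorm r) ^ 2 := by
        rw [mul_pow, mul_pow, hloss]; ring
    _ ≤ _ := hsq
end
end

section
/- Let k₁ ≥ k₂ be positive integers and let ψ : ℝ^{k₁} → ℝ^{k₂} be real analytic. Suppose that for Lebesgue-almost every u ∈ ℝ^{k₁} the derivative Dψ(u) ∈ ℝ^{k₂×k₁} has full row rank k₂. If U is a random vector in ℝ^{k₁} whose law is absolutely continuous with respect to Lebesgue measure, then the law of ψ(U) is absolutely continuous with respect to Lebesgue measure on ℝ^{k₂}; equivalently, for every Lebesgue-null set Z₀ ⊆ ℝ^{k₂}, the set {u : ψ(u) ∈ Z₀ and Dψ(u) has rank k₂} has Lebesgue measure zero in ℝ^{k₁}. -/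
open MeasureTheory Set Function

/-- Preimage of a null set under the coordinate projection is null. -/
lemma aux_proj_null (k₁ k₂ : ℕ) (hk : k₂ ≤ k₁) (Z : Set (Fin k₂ → ℝ))
    (hZm : MeasurableSet Z) (hZ : volume Z = 0) :
    volume {x : Fin k₁ → ℝ | (fun j : Fin k₂ => x (Fin.castLE hk j)) ∈ Z} = 0 := by
  classical
  set p : Fin k₁ → Prop := fun i => (i : ℕ) < k₂ with hp
  let e := MeasurableEquiv.piEquivPiSubtypeProd (fun _ : Fin k₁ => ℝ) p
  have mp : MeasurePreserving e volume volume :=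
    volume_preserving_piEquivPiSubtypeProd (fun _ : Fin k₁ => ℝ) p
  let ε : Fin k₂ ≃ {i : Fin k₁ // p i} :=
    { toFun := fun j => ⟨Fin.castLE hk j, j.2⟩
      invFun := fun i => ⟨(i : Fin k₁), i.2⟩
      left_inv := fun j => rfl
      right_inv := fun i => rfl }
  let e₂ := MeasurableEquiv.piCongrLeft (fun _ : {i : Fin k₁ // p i} => ℝ) ε
  have mp₂ : MeasurePreserving e₂ volume volume :=
    volume_measurePreserving_piCongrLeft (fun _ : {i : Fin k₁ // p i} => ℝ) ε
  set Z' : Set ({i : Fin k₁ // p i} → ℝ) := e₂.symm ⁻¹' Z with hZ'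
  have hZ'm : MeasurableSet Z' := e₂.symm.measurable hZm
  have hZ'0 : volume Z' = 0 := by
    rw [hZ', (mp₂.symm e₂).measure_preimage hZm.nullMeasurableSet, hZ]
  have hWform : {x : Fin k₁ → ℝ | (fun j : Fin k₂ => x (Fin.castLE hk j)) ∈ Z}
      = e ⁻¹' (Z' ×ˢ (univ : Set ({i : Fin k₁ // ¬ p i} → ℝ))) := by
    ext x
    simp only [mem_setOf_eq, mem_preimage, mem_prod, mem_univ, and_true, hZ', mem_preimage]
    have : e₂.symm ((e x).1) = fun j : Fin k₂ => x (Fin.castLE hk j) := by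
      funext j
      rfl
    rw [this]
  rw [hWform, mp.measure_preimage (hZ'm.prod MeasurableSet.univ).nullMeasurableSet,
    MeasureTheory.Measure.volume_eq_prod _ _, Measure.prod_prod, hZ'0, zero_mul]

lemma aux_local (k₁ k₂ : ℕ) (hk : k₂ ≤ k₁)
    (ψ : (Fin k₁ → ℝ) → (Fin k₂ → ℝ)) (hψ : ContDiff ℝ (⊤ : ℕ∞) ψ)
    (Z : Set (Fin k₂ → ℝ)) (hZm : MeasurableSet Z) (hZ : volume Z = 0)
    (u₀ : Fin k₁ → ℝ) (hsurj : Function.Surjective (fderiv ℝ ψ u₀)) :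
    ∃ V : Set (Fin k₁ → ℝ), IsOpen V ∧ u₀ ∈ V ∧ volume (ψ ⁻¹' Z ∩ V) = 0 := by
  classical
  have hdiff : Differentiable ℝ ψ := hψ.differentiable (by simp)
  set A : (Fin k₁ → ℝ) →L[ℝ] (Fin k₂ → ℝ) := fderiv ℝ ψ u₀ with hA
  set Pl : (Fin k₁ → ℝ) →ₗ[ℝ] (Fin k₂ → ℝ) := LinearMap.funLeft ℝ ℝ (Fin.castLE hk) with hPl
  have hPl_surj : Function.Surjective Pl :=
    LinearMap.funLeft_surjective_of_injective ℝ ℝ _ (Fin.castLE_injective hk)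
  have hkerP : Module.finrank ℝ (LinearMap.ker Pl) = k₁ - k₂ := by
    have h := LinearMap.finrank_range_add_finrank_ker Pl
    rw [LinearMap.range_eq_top.mpr hPl_surj, finrank_top] at h
    rw [Module.finrank_fin_fun, Module.finrank_fin_fun] at h
    omega
  have hkerA : Module.finrank ℝ (LinearMap.ker (A : (Fin k₁ → ℝ) →ₗ[ℝ] (Fin k₂ → ℝ))) = k₁ - k₂ := by
    have h := LinearMap.finrank_range_add_finrank_ker (A : (Fin k₁ → ℝ) →ₗ[ℝ] (Fin k₂ → ℝ))
    rw [(LinearMap.range_eq_top (f := (A : (Fin k₁ → ℝ) →ₗ[ℝ] (Fin k₂ → ℝ)))).mpr hsurj,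
      finrank_top] at h
    rw [Module.finrank_fin_fun, Module.finrank_fin_fun] at h
    omega
  obtain ⟨C, hC⟩ := Submodule.exists_isCompl (LinearMap.ker (A : (Fin k₁ → ℝ) →ₗ[ℝ] (Fin k₂ → ℝ)))
  set proj := Submodule.linearProjOfIsCompl _ C hC with hproj
  have he' := FiniteDimensional.nonempty_linearEquiv_of_finrank_eq (R := ℝ)
    (M := LinearMap.ker (A : (Fin k₁ → ℝ) →ₗ[ℝ] (Fin k₂ → ℝ))) (M' := LinearMap.ker Pl)
    (by rw [hkerA, hkerP])
  set e' := he'.some with he'def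
  set Qₗ : (Fin k₁ → ℝ) →ₗ[ℝ] (Fin k₁ → ℝ) :=
    (LinearMap.ker Pl).subtype ∘ₗ (e' : _ →ₗ[ℝ] _) ∘ₗ proj with hQₗ
  set cₗ : (Fin k₂ → ℝ) →ₗ[ℝ] (Fin k₁ → ℝ) :=
    Function.ExtendByZero.linearMap ℝ (Fin.castLE hk) with hcₗ
  set cL := cₗ.toContinuousLinearMap with hcL
  set QL := Qₗ.toContinuousLinearMap with hQL
  set G : (Fin k₁ → ℝ) → (Fin k₁ → ℝ) := fun u => cL (ψ u) + QL u with hG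
  set G' : (Fin k₁ → ℝ) → ((Fin k₁ → ℝ) →L[ℝ] (Fin k₁ → ℝ)) :=
    fun x => cL.comp (fderiv ℝ ψ x) + QL with hG'
  have HG : ∀ x, HasFDerivAt G (G' x) x := fun x =>
    ((cL.hasFDerivAt).comp x (hdiff x).hasFDerivAt).add QL.hasFDerivAt
  -- `P ∘ c = id`
  have hPc : ∀ (y : Fin k₂ → ℝ) (j : Fin k₂), cL y (Fin.castLE hk j) = y j := by
    intro y j
    show Function.extend (Fin.castLE hk) y 0 (Fin.castLE hk j) = y j
    exact Function.Injective.extend_apply (Fin.castLE_injective hk) y 0 j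
  have hQker : ∀ u, QL u ∈ LinearMap.ker Pl := fun u => Submodule.coe_mem _
  have hQP : ∀ (u : Fin k₁ → ℝ) (j : Fin k₂), QL u (Fin.castLE hk j) = 0 := by
    intro u j
    have := hQker u
    rw [LinearMap.mem_ker] at this
    exact congrFun this j
  -- projection of `G` is `ψ`
  have hPG : ∀ u, (fun j : Fin k₂ => G u (Fin.castLE hk j)) = ψ u := by
    intro u
    funext j
    show cL (ψ u) (Fin.castLE hk j) + QL u (Fin.castLE hk j) = ψ u j
    rw [hPc, hQP, add_zero]
  -- injectivity of the derivative at `u₀`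
  have hTinj : Function.Injective (G' u₀) := by
    intro u v huv
    rw [← sub_eq_zero, ← map_sub] at huv
    set w := u - v with hw
    have hAw : A w = 0 := by
      funext j
      have := congrFun huv (Fin.castLE hk j)
      show A w j = 0
      have h1 : cL (A w) (Fin.castLE hk j) + QL w (Fin.castLE hk j) = 0 := this
      rw [hQP, add_zero, hPc] at h1
      exact h1
    have hcAw : cL (A w) = 0 := by rw [hAw]; simp
    have hQw : QL w = 0 := by
      have h2 : cL (A w) + QL w = 0 := huv
      rwa [hcAw, zero_add] at h2
    have hwker : w ∈ LinearMap.ker (A : (Fin k₁ → ℝ) →ₗ[ℝ] (Fin k₂ → ℝ)) := hAw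
    have hprojw : proj w = ⟨w, hwker⟩ :=
      Submodule.linearProjOfIsCompl_apply_left hC ⟨w, hwker⟩
    have : ((LinearMap.ker Pl).subtype) (e' (proj w)) = 0 := hQw
    have h3 : e' (proj w) = 0 := Subtype.ext this
    have h4 : proj w = 0 := e'.injective (by rw [h3, map_zero])
    rw [hprojw] at h4
    have : w = 0 := congrArg Subtype.val h4
    exact sub_eq_zero.mp this
  have hTsurj : Function.Surjective ((G' u₀ : (Fin k₁ → ℝ) →ₗ[ℝ] (Fin k₁ → ℝ))) :=
    (LinearMap.injective_iff_surjective).mp hTinj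
  set Teq : (Fin k₁ → ℝ) ≃L[ℝ] (Fin k₁ → ℝ) :=
    (LinearEquiv.ofBijective ((G' u₀ : (Fin k₁ → ℝ) →ₗ[ℝ] (Fin k₁ → ℝ))) ⟨hTinj, hTsurj⟩).toContinuousLinearEquiv with hTeqdef
  have hTeq : (Teq : (Fin k₁ → ℝ) →L[ℝ] (Fin k₁ → ℝ)) = G' u₀ := by
    ext u
    rfl
  have hstrict : HasStrictFDerivAt G (Teq : (Fin k₁ → ℝ) →L[ℝ] (Fin k₁ → ℝ)) u₀ := by
    rw [hTeq]
    have h1 : HasStrictFDerivAt ψ A u₀ := (hψ.contDiffAt).hasStrictFDerivAt (by simp)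
    exact ((cL.hasStrictFDerivAt).comp u₀ h1).add QL.hasStrictFDerivAt
  set F := hstrict.toOpenPartialHomeomorph G with hF
  have hFcoe : (F : (Fin k₁ → ℝ) → (Fin k₁ → ℝ)) = G := hstrict.toOpenPartialHomeomorph_coe
  have hu₀F : u₀ ∈ F.source := hstrict.mem_toOpenPartialHomeomorph_source
  -- the set where the Jacobian does not vanish
  have hfd : Continuous fun x => fderiv ℝ ψ x := hψ.continuous_fderiv (by simp)
  have hcont : Continuous fun x => (G' x).det := by
    apply ContinuousLinearMap.continuous_det.comp
    exact (((ContinuousLinearMap.compL ℝ (Fin k₁ → ℝ) (Fin k₂ → ℝ) (Fin k₁ → ℝ) cL).continuous).comp hfd).add continuous_const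
  have hV₂open : IsOpen {x | (G' x).det ≠ 0} :=
    isOpen_compl_singleton.preimage hcont
  have hu₀V₂ : (G' u₀).det ≠ 0 := by
    rw [← hTeq]
    exact IsUnit.ne_zero (LinearEquiv.isUnit_det' Teq.toLinearEquiv)
  set V := F.source ∩ {x | (G' x).det ≠ 0} with hV
  have hVopen : IsOpen V := F.open_source.inter hV₂open
  have hu₀V : u₀ ∈ V := ⟨hu₀F, hu₀V₂⟩
  refine ⟨V, hVopen, hu₀V, ?_⟩
  set s := ψ ⁻¹' Z ∩ V with hs
  have hsm : MeasurableSet s := (hψ.continuous.measurable hZm).inter hVopen.measurableSet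
  have hderiv : ∀ x ∈ s, HasFDerivWithinAt G (G' x) s x := fun x _ => (HG x).hasFDerivWithinAt
  have hinj : InjOn G s := by
    have := F.injOn
    rw [hFcoe] at this
    exact this.mono (fun x hx => hx.2.1)
  have key := lintegral_abs_det_fderiv_le_addHaar_image volume hsm hderiv hinj
  have himg : volume (G '' s) = 0 := by
    apply measure_mono_null _ (aux_proj_null k₁ k₂ hk Z hZm hZ)
    rintro w ⟨u, hu, rfl⟩
    show (fun j : Fin k₂ => G u (Fin.castLE hk j)) ∈ Z
    rw [hPG]
    exact hu.1
  have hzero : (∫⁻ x in s, ENNReal.ofReal |(G' x).det| ∂volume) = 0 :=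
    le_antisymm (himg ▸ key) zero_le
  have fmeas : Measurable fun x => ENNReal.ofReal |(G' x).det| :=
    ENNReal.measurable_ofReal.comp hcont.abs.measurable
  have h0 : ∀ᵐ x ∂(volume.restrict s), ENNReal.ofReal |(G' x).det| = 0 :=
    (lintegral_eq_zero_iff fmeas).mp hzero
  have hsub : s ⊆ {x | ¬ ENNReal.ofReal |(G' x).det| = 0} := by
    intro x hx
    simp only [mem_setOf_eq, ENNReal.ofReal_eq_zero, not_le]
    exact abs_pos.mpr hx.2.2
  have : volume.restrict s {x | ¬ ENNReal.ofReal |(G' x).det| = 0} = 0 := ae_iff.mp h0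
  refine le_antisymm ?_ zero_le
  calc volume s = volume.restrict s s := (Measure.restrict_apply_self _ _).symm
    _ ≤ volume.restrict s {x | ¬ ENNReal.ofReal |(G' x).det| = 0} := measure_mono hsub
    _ = 0 := this


/-- let `k₁ ≥ k₂` be positive integers and `ψ : ℝ^{k₁} → ℝ^{k₂}` a real
analytic map such that for Lebesgue-almost every `u` the derivative `Dψ(u)` has full row
rank `k₂` (equivalently, is surjective).  If the law `μ` of a random vector in `ℝ^{k₁}` is
absolutely continuous with respect to Lebesgue measure, then so is the law of `ψ(U)`,
i.e. the pushforward `ψ_* μ` is absolutely continuous with respect to Lebesgue measure on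
`ℝ^{k₂}`. -/
theorem statement_14
    (k₁ k₂ : ℕ) (hk₁ : 0 < k₁) (hk₂ : 0 < k₂) (hk : k₂ ≤ k₁)
    (ψ : (Fin k₁ → ℝ) → (Fin k₂ → ℝ))
    (hψ : ∀ u, AnalyticAt ℝ ψ u)
    (hrank : ∀ᵐ u : Fin k₁ → ℝ ∂volume, Function.Surjective (fderiv ℝ ψ u))
    (μ : Measure (Fin k₁ → ℝ)) [IsProbabilityMeasure μ] (hμ : μ ≪ volume) :
    Measure.map ψ μ ≪ (volume : Measure (Fin k₂ → ℝ)) := by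
  have hψcd : ContDiff ℝ (⊤ : ℕ∞) ψ := contDiff_iff_contDiffAt.mpr fun x => (hψ x).contDiffAt
  have hψm : Measurable ψ := hψcd.continuous.measurable
  refine Measure.AbsolutelyContinuous.mk fun Z hZm hZ => ?_
  rw [Measure.map_apply hψm hZm]
  set S : Set (Fin k₁ → ℝ) := {u | Function.Surjective (fderiv ℝ ψ u)} with hS
  have hSc : volume Sᶜ = 0 := by
    have := ae_iff.mp hrank
    simpa [hS, Set.compl_setOf] using this
  have hT : volume (ψ ⁻¹' Z ∩ S) = 0 := by
    apply measure_null_of_locally_null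
    intro x hx
    obtain ⟨V, hVopen, hxV, hV0⟩ := aux_local k₁ k₂ hk ψ hψcd Z hZm hZ x hx.2
    refine ⟨ψ ⁻¹' Z ∩ V, ?_, hV0⟩
    refine Filter.mem_of_superset
      (Filter.inter_mem self_mem_nhdsWithin
        (mem_nhdsWithin_of_mem_nhds (hVopen.mem_nhds hxV))) ?_
    exact fun y hy => ⟨hy.1.1, hy.2⟩
  have h1 : μ (ψ ⁻¹' Z ∩ S) = 0 := hμ hT
  have h2 : μ Sᶜ = 0 := hμ hSc
  refine le_antisymm ?_ zero_le
  calc μ (ψ ⁻¹' Z) ≤ μ ((ψ ⁻¹' Z ∩ S) ∪ Sᶜ) := by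
        apply measure_mono
        intro u hu
        by_cases h : u ∈ S
        · exact Or.inl ⟨hu, h⟩
        · exact Or.inr h
    _ ≤ μ (ψ ⁻¹' Z ∩ S) + μ Sᶜ := measure_union_le _ _
    _ = 0 := by rw [h1, h2, add_zero]
end
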